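/- The function f : ℝ → ℝ defined by f(z) = −log(1 − Φ(|z|)) is convex on ℝ. -/

import Mathlib

/-! Write `Q = 1 - Φ = ∫_t^∞ φ` and `g = -log Q`. Then `g' = φ / Q` is the hazard rate, and
`(φ / Q)' = φ (φ - t Q) / Q²` is nonnegative because `t Q(t) ≤ ∫_t^∞ s φ(s) ds = φ(t)`.
Hence `g` is convex and increasing on all of `ℝ`, so `g ∘ |·|` is convex. -/

/-- The standard normal density φ(t) = (1/√(2π))·exp(−t²/2). -/
noncomputable def stdNormalPDF (t : ℝ) : ℝ :=
  (Real.sqrt (2 * Real.pi))⁻¹ * Real.exp (-t ^ 2 / 2)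

/-- The standard normal cumulative distribution function Φ(t) = ∫_{−∞}^t φ(s) ds. -/
noncomputable def stdNormalCDF (t : ℝ) : ℝ :=
  ∫ s in Set.Iic t, stdNormalPDF s

open Set MeasureTheory Real Filter ProbabilityTheory

lemma stdNormalPDF_eq_gaussianPDFReal : stdNormalPDF = gaussianPDFReal 0 1 := by
  ext t
  simp only [stdNormalPDF, gaussianPDFReal, sub_zero, NNReal.coe_one, mul_one]

lemma stdNormalPDF_pos (t : ℝ) : 0 < stdNormalPDF t := by
  rw [stdNormalPDF_eq_gaussianPDFReal]
  exact gaussianPDFReal_pos _ _ _ one_ne_zero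

lemma continuous_stdNormalPDF : Continuous stdNormalPDF := by
  unfold stdNormalPDF
  fun_prop

lemma integrable_stdNormalPDF : Integrable stdNormalPDF := by
  rw [stdNormalPDF_eq_gaussianPDFReal]
  exact integrable_gaussianPDFReal _ _

lemma integral_stdNormalPDF : ∫ t, stdNormalPDF t = 1 := by
  rw [stdNormalPDF_eq_gaussianPDFReal]
  exact integral_gaussianPDFReal_eq_one _ one_ne_zero

lemma hasDerivAt_stdNormalPDF (t : ℝ) : HasDerivAt stdNormalPDF (-t * stdNormalPDF t) t := by
  have h := ((((hasDerivAt_pow 2 t).neg).div_const 2).exp).const_mul (√(2 * π))⁻¹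
  exact h.congr_deriv (by simp only [stdNormalPDF, Pi.neg_apply]; ring)

lemma tendsto_stdNormalPDF_atTop : Tendsto stdNormalPDF atTop (nhds 0) := by
  have h : Tendsto (fun s : ℝ => -s ^ 2 / 2) atTop atBot :=
    (tendsto_neg_atTop_atBot.comp (tendsto_pow_atTop two_ne_zero)).atBot_div_const two_pos
  have h' := (tendsto_exp_atBot.comp h).const_mul (√(2 * π))⁻¹
  rw [mul_zero] at h'
  exact h'

lemma integrable_mul_stdNormalPDF : Integrable fun t => t * stdNormalPDF t := by
  have h := (integrable_mul_exp_neg_mul_sq (one_half_pos (α := ℝ))).const_mul (√(2 * π))⁻¹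
  refine h.congr (Eventually.of_forall fun t => ?_)
  simp only [stdNormalPDF]
  ring_nf

lemma one_sub_stdNormalCDF_eq_integral_Ioi (t : ℝ) :
    1 - stdNormalCDF t = ∫ s in Ioi t, stdNormalPDF s := by
  rw [← integral_stdNormalPDF, ← intervalIntegral.integral_Iic_add_Ioi
    integrable_stdNormalPDF.integrableOn integrable_stdNormalPDF.integrableOn, stdNormalCDF,
    add_sub_cancel_left]

lemma one_sub_stdNormalCDF_pos (t : ℝ) : 0 < 1 - stdNormalCDF t := by
  rw [one_sub_stdNormalCDF_eq_integral_Ioi]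
  refine (setIntegral_pos_iff_support_of_nonneg_ae
    (ae_of_all _ fun s => (stdNormalPDF_pos s).le) integrable_stdNormalPDF.integrableOn).2 ?_
  simp [Function.support, (stdNormalPDF_pos _).ne']

lemma hasDerivAt_stdNormalCDF (t : ℝ) : HasDerivAt stdNormalCDF (stdNormalPDF t) t := by
  have h : stdNormalCDF = fun x => stdNormalCDF 0 + ∫ s in (0 : ℝ)..x, stdNormalPDF s := by
    funext x
    rw [← intervalIntegral.integral_Iic_sub_Iic integrable_stdNormalPDF.integrableOn
      integrable_stdNormalPDF.integrableOn, stdNormalCDF, stdNormalCDF, add_sub_cancel]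
  rw [h]
  exact (intervalIntegral.integral_hasDerivAt_right integrable_stdNormalPDF.intervalIntegrable
    (continuous_stdNormalPDF.stronglyMeasurableAtFilter _ _)
    continuous_stdNormalPDF.continuousAt).const_add _

lemma integral_Ioi_mul_stdNormalPDF (t : ℝ) :
    ∫ s in Ioi t, s * stdNormalPDF s = stdNormalPDF t := by
  have h := integral_Ioi_of_hasDerivAt_of_tendsto' (a := t)
    (fun s _ => ((hasDerivAt_stdNormalPDF s).neg).congr_deriv (by ring))
    integrable_mul_stdNormalPDF.integrableOn tendsto_stdNormalPDF_atTop.neg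
  simpa using h

lemma mul_one_sub_stdNormalCDF_le (t : ℝ) : t * (1 - stdNormalCDF t) ≤ stdNormalPDF t := by
  rw [one_sub_stdNormalCDF_eq_integral_Ioi, ← integral_const_mul,
    ← integral_Ioi_mul_stdNormalPDF t]
  refine setIntegral_mono_on (integrable_stdNormalPDF.const_mul t).integrableOn
    integrable_mul_stdNormalPDF.integrableOn measurableSet_Ioi fun s hs => ?_
  exact mul_le_mul_of_nonneg_right (le_of_lt hs) (stdNormalPDF_pos s).le

lemma hasDerivAt_one_sub_stdNormalCDF (t : ℝ) :
    HasDerivAt (fun t => 1 - stdNormalCDF t) (-stdNormalPDF t) t :=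
  (hasDerivAt_stdNormalCDF t).const_sub 1

lemma hasDerivAt_neg_log_one_sub_stdNormalCDF (t : ℝ) :
    HasDerivAt (fun t => -log (1 - stdNormalCDF t))
      (stdNormalPDF t / (1 - stdNormalCDF t)) t :=
  ((hasDerivAt_one_sub_stdNormalCDF t).log (one_sub_stdNormalCDF_pos t).ne').neg.congr_deriv
    (by ring)

lemma monotone_stdNormalPDF_div_one_sub_stdNormalCDF :
    Monotone fun t => stdNormalPDF t / (1 - stdNormalCDF t) := by
  refine monotone_of_hasDerivAt_nonneg
    (fun t => (hasDerivAt_stdNormalPDF t).div (hasDerivAt_one_sub_stdNormalCDF t)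
      (one_sub_stdNormalCDF_pos t).ne') fun t => ?_
  refine div_nonneg ?_ (sq_nonneg _)
  calc (0 : ℝ) ≤ stdNormalPDF t * (stdNormalPDF t - t * (1 - stdNormalCDF t)) :=
        mul_nonneg (stdNormalPDF_pos t).le (sub_nonneg.2 (mul_one_sub_stdNormalCDF_le t))
    _ = _ := by ring

lemma convexOn_neg_log_one_sub_stdNormalCDF :
    ConvexOn ℝ univ fun t => -log (1 - stdNormalCDF t) := by
  refine Monotone.convexOn_univ_of_deriv
    (fun t => (hasDerivAt_neg_log_one_sub_stdNormalCDF t).differentiableAt) ?_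
  rw [funext fun t => (hasDerivAt_neg_log_one_sub_stdNormalCDF t).deriv]
  exact monotone_stdNormalPDF_div_one_sub_stdNormalCDF

lemma monotone_neg_log_one_sub_stdNormalCDF :
    Monotone fun t => -log (1 - stdNormalCDF t) :=
  monotone_of_hasDerivAt_nonneg hasDerivAt_neg_log_one_sub_stdNormalCDF fun t =>
    (div_pos (stdNormalPDF_pos t) (one_sub_stdNormalCDF_pos t)).le

/-- The function f(z) = −log(1 − Φ(|z|)) is convex on ℝ. -/
theorem stmt_2 :
    ConvexOn ℝ Set.univ (fun z : ℝ => -Real.log (1 - stdNormalCDF |z|)) := by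
  have hconv : Convex ℝ ((|·|) '' (univ : Set ℝ)) :=
    (isPreconnected_univ.image _ continuous_abs.continuousOn).convex
  exact (convexOn_neg_log_one_sub_stdNormalCDF.subset (subset_univ _) hconv).comp
    convexOn_univ_norm (monotone_neg_log_one_sub_stdNormalCDF.monotoneOn _)
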